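/- Let q1, q2 be elements of a field with q = q1 q2, all of q1^{1/2}, q2^{1/2} existing, and let ζ(x) = (1-xq1)(1-xq2)/((1-x)(1-xq)). Then for any n ≥ 1, the symmetrization Sym[∏_{1≤i<j≤n} ζ(z_i/z_j)] · ∏_{1≤i<j≤n} (z_i - z_j q)(z_j - z_i q) is a symmetric Laurent polynomial in z_1,...,z_n (i.e. all poles at z_i = z_j cancel upon symmetrization). -/

import Mathlib

/-!
Write `G = ∏_{i<j} (z_j - q₁ z_i)(z_j - q₂ z_i)(z_i - q z_j)` and `Δ = ∏_{i<j} (z_j - z_i)`.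
Since `∏_{i<j} (z_i - q z_j)(z_j - q z_i)` is symmetric, the `σ`-term of the symmetrization,
multiplied by it, equals `σ(G) / σ(Δ) = sign σ · σ(G) / Δ`. Hence the whole expression is
`A(G) / Δ`, where `A` is the antisymmetrizer. An antisymmetrized polynomial vanishes modulo every
`z_i - z_j` (pair the terms of `σ` and `(i j) σ`), and these are pairwise non-associate
irreducibles in a UFD, so `Δ ∣ A(G)`; the quotient is symmetric because `A(G)` and `Δ` are both
alternating.
-/

open MvPolynomial Finset

def ltPairs (ι : Type*) [Fintype ι] [LinearOrder ι] : Finset (ι × ι) :=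
  univ.filter fun pr => pr.1 < pr.2

@[simp] theorem mem_ltPairs {ι : Type*} [Fintype ι] [LinearOrder ι] {pr : ι × ι} :
    pr ∈ ltPairs ι ↔ pr.1 < pr.2 := by
  simp [ltPairs]

theorem prod_ltPairs_perm {ι M : Type*} [Fintype ι] [LinearOrder ι] [CommMonoid M]
    (τ : Equiv.Perm ι) (g : ι → ι → M) (hg : ∀ a b, g a b = g b a) :
    ∏ pr ∈ ltPairs ι, g (τ pr.1) (τ pr.2) = ∏ pr ∈ ltPairs ι, g pr.1 pr.2 := by
  refine prod_nbij' (fun pr => (min (τ pr.1) (τ pr.2), max (τ pr.1) (τ pr.2)))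
    (fun pr => (min (τ.symm pr.1) (τ.symm pr.2), max (τ.symm pr.1) (τ.symm pr.2)))
    ?_ ?_ ?_ ?_ ?_ <;> rintro ⟨a, b⟩ hab <;> rw [mem_ltPairs] at hab
  · simpa using hab.ne'
  · simpa using hab.ne'
  · rcases le_total (τ a) (τ b) with h | h <;> simp [h, hab.le]
  · rcases le_total (τ.symm a) (τ.symm b) with h | h <;> simp [h, hab.le]
  · rcases le_total (τ a) (τ b) with h | h <;> simp [h, hg (τ a)]

namespace MvPolynomial

variable {σ R : Type*} [CommRing R]

theorem X_sub_C_mul_X_ne_zero [Nontrivial R] {i j : σ} (hij : i ≠ j) (c : R) :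
    (X i - C c * X j : MvPolynomial σ R) ≠ 0 := by
  classical
  intro h
  simpa [hij.symm] using congrArg (eval (Pi.single i (1 : R))) h

theorem irreducible_X_sub_X [IsDomain R] {i j : σ} (hij : i ≠ j) :
    Irreducible (X i - X j : MvPolynomial σ R) := by
  classical
  have hcoeff : (X i - X j : MvPolynomial σ R).coeff (Finsupp.single i 1) = 1 := by
    simp [coeff_X, Finsupp.single_left_inj one_ne_zero, hij.symm]
  refine irreducible_of_totalDegree_eq_one (le_antisymm ?_ ?_) fun r hr => ?_
  · exact (totalDegree_sub _ _).trans (by simp [totalDegree_X])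
  · simpa using le_totalDegree (s := Finsupp.single i 1) (by simp [mem_support_iff, hcoeff])
  · exact isUnit_of_dvd_one (hcoeff ▸ hr _)

theorem not_X_sub_X_dvd_X_sub_X [Nontrivial R] {i j k l : σ} (hki : k ≠ i) (hkj : k ≠ j)
    (hkl : k ≠ l) : ¬ (X i - X j : MvPolynomial σ R) ∣ X k - X l := by
  classical
  rintro ⟨r, hr⟩
  simpa [hki.symm, hkj.symm, hkl.symm] using congrArg (eval (Pi.single k (1 : R))) hr

theorem X_sub_X_dvd_sub_rename_swap [DecidableEq σ] (i j : σ) (f : MvPolynomial σ R) :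
    X i - X j ∣ f - rename (Equiv.swap i j) f := by
  rw [← Ideal.mem_span_singleton, ← Ideal.Quotient.eq]
  set I := Ideal.span {(X i - X j : MvPolynomial σ R)}
  have hij : Ideal.Quotient.mk I (X i) = Ideal.Quotient.mk I (X j) :=
    Ideal.Quotient.eq.2 (Ideal.mem_span_singleton_self _)
  have : (Ideal.Quotient.mkₐ R I).comp (rename (Equiv.swap i j)) = Ideal.Quotient.mkₐ R I := by
    ext k
    simp only [AlgHom.comp_apply, rename_X, Ideal.Quotient.mkₐ_eq_mk, Equiv.swap_apply_def]
    split_ifs <;> simp_all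
  exact (DFunLike.congr_fun this f).symm

section antisymmetrize

variable [Fintype σ] [DecidableEq σ]

noncomputable def antisymmetrize (f : MvPolynomial σ R) : MvPolynomial σ R :=
  ∑ τ : Equiv.Perm σ, Equiv.Perm.sign τ • rename τ f

theorem rename_antisymmetrize (τ : Equiv.Perm σ) (f : MvPolynomial σ R) :
    rename τ (antisymmetrize f) = Equiv.Perm.sign τ • antisymmetrize f := by
  simp only [antisymmetrize, map_sum, map_zsmul_unit, rename_rename, smul_sum]
  refine Fintype.sum_equiv (Equiv.mulLeft τ) _ _ fun π => ?_
  rw [Equiv.coe_mulLeft, Equiv.Perm.sign_mul, smul_smul, ← mul_assoc, Int.units_mul_self,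
    one_mul, Equiv.Perm.coe_mul]

theorem X_sub_X_dvd_antisymmetrize {i j : σ} (hij : i ≠ j) (f : MvPolynomial σ R) :
    X i - X j ∣ antisymmetrize f := by
  -- Pair `π` with `(i j) π` rather than use `rename (swap i j) (antisymmetrize f) = -_`, which
  -- says nothing in characteristic 2.
  rw [← Ideal.mem_span_singleton, ← Ideal.Quotient.eq_zero_iff_mem, antisymmetrize, map_sum]
  refine sum_involution (fun π _ => Equiv.swap i j * π) (fun π _ => ?_) (fun π _ _ h => ?_)
    (fun _ _ => mem_univ _) (fun π _ => Equiv.swap_mul_self_mul i j π)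
  · rw [← map_add, Ideal.Quotient.eq_zero_iff_mem, Ideal.mem_span_singleton,
      Equiv.Perm.sign_mul, Equiv.Perm.sign_swap hij, Equiv.Perm.coe_mul, ← rename_rename,
      mul_smul, Units.neg_smul, one_smul, ← sub_eq_add_neg, ← smul_sub]
    exact dvd_smul_of_dvd _ (X_sub_X_dvd_sub_rename_swap i j (rename π f))
  · exact hij (Equiv.swap_eq_one_iff.mp (mul_eq_right.mp h))

end antisymmetrize

noncomputable def vandermonde (n : ℕ) (R : Type*) [CommRing R] : MvPolynomial (Fin n) R :=
  ∏ pr ∈ ltPairs (Fin n), (X pr.2 - X pr.1)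

variable {n : ℕ}

theorem vandermonde_eq_det : vandermonde n R = (Matrix.vandermonde X).det := by
  rw [Matrix.det_vandermonde]
  exact prod_finset_product' _ _ _ (f := fun i j => X j - X i) fun pr => by simp

theorem rename_vandermonde (τ : Equiv.Perm (Fin n)) :
    rename τ (vandermonde n R) = Equiv.Perm.sign τ • vandermonde n R := by
  have : (rename τ).mapMatrix (Matrix.vandermonde (X : Fin n → MvPolynomial (Fin n) R)) =
      (Matrix.vandermonde X).submatrix τ id := by
    ext a b
    simp [Matrix.vandermonde]
  rw [vandermonde_eq_det, AlgHom.map_det, this, Matrix.det_permute, Units.smul_def, zsmul_eq_mul]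

theorem vandermonde_ne_zero [IsDomain R] : vandermonde n R ≠ 0 :=
  prod_ne_zero_iff.2 fun _ hpr => sub_ne_zero.2 (X_injective.ne (mem_ltPairs.1 hpr).ne')

theorem vandermonde_dvd_antisymmetrize [IsDomain R] [UniqueFactorizationMonoid R]
    (f : MvPolynomial (Fin n) R) : vandermonde n R ∣ antisymmetrize f := by
  refine prod_dvd_of_isRelPrime ?_ fun pr hpr =>
    X_sub_X_dvd_antisymmetrize (mem_ltPairs.1 hpr).ne' f
  rintro ⟨a, b⟩ hab ⟨c, d⟩ hcd hne
  simp only [mem_coe, mem_ltPairs, ne_eq, Prod.mk.injEq] at hab hcd hne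
  rw [Function.onFun, (irreducible_X_sub_X hab.ne').isRelPrime_iff_not_dvd]
  dsimp only
  -- `(c, d) ≠ (a, b)` has an entry outside `{a, b}`; evaluate at the indicator of that entry.
  by_cases hd : d = a ∨ d = b
  · rw [← dvd_neg, neg_sub]
    exact not_X_sub_X_dvd_X_sub_X (by omega) (by omega) hcd.ne
  · exact not_X_sub_X_dvd_X_sub_X (by omega) (by omega) hcd.ne'

theorem exists_isSymmetric_antisymmetrize_eq_vandermonde_mul [IsDomain R]
    [UniqueFactorizationMonoid R] (f : MvPolynomial (Fin n) R) :
    ∃ p : MvPolynomial (Fin n) R, p.IsSymmetric ∧ antisymmetrize f = vandermonde n R * p := by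
  obtain ⟨p, hp⟩ := vandermonde_dvd_antisymmetrize f
  refine ⟨p, fun τ => mul_left_cancel₀ vandermonde_ne_zero
    (MulAction.injective (Equiv.Perm.sign τ) ?_), hp⟩
  have h := rename_antisymmetrize τ f
  rwa [hp, map_mul, rename_vandermonde, smul_mul_assoc] at h

theorem sum_prod_perm_mul_eq_antisymmetrize_div {L : Type*} [Field L]
    (φ : MvPolynomial (Fin n) R →+* L) (F w : Fin n → Fin n → L) (hw : ∀ a b, w a b = w b a)
    (g : Fin n → Fin n → MvPolynomial (Fin n) R)
    (hg : ∀ (τ : Equiv.Perm (Fin n)) a b, rename τ (g a b) = g (τ a) (τ b))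
    (hF : ∀ a b, a ≠ b → F a b * w a b = φ (g a b) / φ (X b - X a)) :
    (∑ τ : Equiv.Perm (Fin n), ∏ pr ∈ ltPairs (Fin n), F (τ pr.1) (τ pr.2)) *
        ∏ pr ∈ ltPairs (Fin n), w pr.1 pr.2 =
      φ (antisymmetrize (∏ pr ∈ ltPairs (Fin n), g pr.1 pr.2)) / φ (vandermonde n R) := by
  rw [sum_mul, antisymmetrize, map_sum, sum_div]
  refine sum_congr rfl fun τ _ => ?_
  calc (∏ pr ∈ ltPairs (Fin n), F (τ pr.1) (τ pr.2)) * ∏ pr ∈ ltPairs (Fin n), w pr.1 pr.2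
      = ∏ pr ∈ ltPairs (Fin n), F (τ pr.1) (τ pr.2) * w (τ pr.1) (τ pr.2) := by
        rw [← prod_ltPairs_perm τ w hw, prod_mul_distrib]
    _ = ∏ pr ∈ ltPairs (Fin n), φ (g (τ pr.1) (τ pr.2)) / φ (X (τ pr.2) - X (τ pr.1)) :=
        prod_congr rfl fun pr hpr => hF _ _ (τ.injective.ne (mem_ltPairs.1 hpr).ne)
    _ = φ (rename τ (∏ pr ∈ ltPairs (Fin n), g pr.1 pr.2)) / φ (rename τ (vandermonde n R)) := by
        simp only [prod_div_distrib, vandermonde, map_prod, map_sub, rename_X, hg]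
    _ = φ (Equiv.Perm.sign τ • rename τ (∏ pr ∈ ltPairs (Fin n), g pr.1 pr.2)) /
          φ (vandermonde n R) := by
        rw [rename_vandermonde, map_zsmul_unit, map_zsmul_unit]
        rcases Int.units_eq_one_or (Equiv.Perm.sign τ) with h | h <;> simp [h, div_neg, neg_div]

end MvPolynomial

-- `ζ(z_a / z_b) (z_a - q z_b)(z_b - q z_a) = zetaFactor q1 q2 a b / (z_b - z_a)`.
noncomputable def zetaFactor {R : Type*} [CommRing R] {n : ℕ} (q1 q2 : R) (a b : Fin n) :
    MvPolynomial (Fin n) R :=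
  (X b - C q1 * X a) * (X b - C q2 * X a) * (X a - C (q1 * q2) * X b)

theorem zeta_mul_eq_zetaFactor_div {R L : Type*} [CommRing R] [Nontrivial R] [Field L] {n : ℕ}
    (φ : MvPolynomial (Fin n) R →+* L) (hφ : Function.Injective φ) (q1 q2 : R) {a b : Fin n}
    (hab : a ≠ b) :
    (1 - φ (X a) / φ (X b) * φ (C q1)) * (1 - φ (X a) / φ (X b) * φ (C q2)) /
          ((1 - φ (X a) / φ (X b)) * (1 - φ (X a) / φ (X b) * φ (C (q1 * q2)))) *
        ((φ (X a) - φ (C (q1 * q2)) * φ (X b)) * (φ (X b) - φ (C (q1 * q2)) * φ (X a))) =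
      φ (zetaFactor q1 q2 a b) / φ (X b - X a) := by
  have hb : φ (X b) ≠ 0 := (map_ne_zero_iff φ hφ).2 (X_ne_zero b)
  have hba : φ (X b) - φ (X a) ≠ 0 := by
    rw [← map_sub, map_ne_zero_iff φ hφ]
    exact sub_ne_zero.2 (X_injective.ne hab.symm)
  have hbqa : φ (X b) - φ (X a) * φ (C (q1 * q2)) ≠ 0 := by
    rw [mul_comm, ← map_mul, ← map_sub, map_ne_zero_iff φ hφ]
    exact X_sub_C_mul_X_ne_zero hab.symm _
  simp only [zetaFactor, map_mul φ, map_sub]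
  field_simp

/-- in the field of rational functions in z_1,...,z_n over K
(q1, q2 ∈ K, q = q1q2), the element
Sym[∏_{i<j} ζ(z_i/z_j)] · ∏_{i<j} (z_i - q z_j)(z_j - q z_i),
where ζ(x) = (1-xq1)(1-xq2)/((1-x)(1-xq)) and Sym sums over all permutations,
is a symmetric Laurent polynomial: it equals p/(z_1⋯z_n)^d for some d and some
symmetric polynomial p. -/
theorem stmt_2 (K : Type*) [Field K] (q1 q2 : K) (n : ℕ)
    (L : Type*) [Field L] [Algebra (MvPolynomial (Fin n) K) L]
    [IsFractionRing (MvPolynomial (Fin n) K) L]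
    (Z : Fin n → L) (hZ : ∀ i, Z i = algebraMap (MvPolynomial (Fin n) K) L (X i))
    (zeta : L → L)
    (hzeta : ∀ x : L,
      zeta x = ((1 - x * algebraMap (MvPolynomial (Fin n) K) L (C q1)) *
          (1 - x * algebraMap (MvPolynomial (Fin n) K) L (C q2))) /
        ((1 - x) * (1 - x * algebraMap (MvPolynomial (Fin n) K) L (C (q1 * q2))))) :
    ∃ (p : MvPolynomial (Fin n) K) (d : ℕ),
      (∀ σ : Equiv.Perm (Fin n), rename σ p = p) ∧
      (∑ σ : Equiv.Perm (Fin n),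
          ∏ pr ∈ Finset.univ.filter (fun pr : Fin n × Fin n => pr.1 < pr.2),
            zeta (Z (σ pr.1) / Z (σ pr.2))) *
        (∏ pr ∈ Finset.univ.filter (fun pr : Fin n × Fin n => pr.1 < pr.2),
          ((Z pr.1 - algebraMap (MvPolynomial (Fin n) K) L (C (q1 * q2)) * Z pr.2) *
            (Z pr.2 - algebraMap (MvPolynomial (Fin n) K) L (C (q1 * q2)) * Z pr.1))) *
        (∏ i, Z i) ^ d
      = algebraMap (MvPolynomial (Fin n) K) L p := by
  obtain ⟨p, hp_symm, hp⟩ := exists_isSymmetric_antisymmetrize_eq_vandermonde_mul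
    (∏ pr ∈ ltPairs (Fin n), zetaFactor q1 q2 pr.1 pr.2)
  refine ⟨p, 0, hp_symm, ?_⟩
  set φ := algebraMap (MvPolynomial (Fin n) K) L
  have hφ : Function.Injective φ := IsFractionRing.injective _ _
  rw [pow_zero, mul_one]
  refine (sum_prod_perm_mul_eq_antisymmetrize_div φ (fun a b => zeta (Z a / Z b))
    (fun a b => (Z a - φ (C (q1 * q2)) * Z b) * (Z b - φ (C (q1 * q2)) * Z a))
    (fun a b => by ring) (zetaFactor q1 q2) (fun τ a b => by simp [zetaFactor])
    (fun a b hab => ?_)).trans ?_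
  · simp only [hZ, hzeta]
    exact zeta_mul_eq_zetaFactor_div φ hφ q1 q2 hab
  · rw [hp, map_mul, mul_div_cancel_left₀ _ ((map_ne_zero_iff _ hφ).2 vandermonde_ne_zero)]
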